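/- arXiv:0805.1272 — 3 statements merged into one kernel-verified Lean document; each statement's English description precedes it below -/
import Mathlib

section
/- For any integers m ≥ 1, n ≥ 1, any subset S of [m] = {1,2,…,m} with s = |S|, the sum over all complete (m+1)-ary trees T with n internal vertices of the product over all internal vertices v of T of (((m−s)·ℍ_v^S + 1)x − ℍ_v^S + 1)/((m−s+1)·ℍ_v^S) equals (1/(mn+1)) · C((mn+1)x, n), as an identity of polynomials in x over ℚ. -/
open Polynomial Finset

/-- A complete `m`-ary tree: a `leaf` is an external vertex and a `node`
has exactly `m` linearly ordered subtrees. -/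
inductive MTree (m : ℕ) : Type
  | leaf : MTree m
  | node : (Fin m → MTree m) → MTree m

namespace MTree

/-- The number of internal vertices of a complete `m`-ary tree. -/
def internals {m : ℕ} : MTree m → ℕ
  | leaf => 0
  | node c => 1 + ∑ i, (c i).internals

/-- The first kind of hook length of the root of `node c`: one plus the number of
internal vertices of all subtrees except the rightmost one. -/
def hook1 {m : ℕ} (c : Fin m → MTree m) : ℕ :=
  1 + ∑ i ∈ Finset.univ.filter (fun i : Fin m => (i : ℕ) + 1 < m), (c i).internals

/-- The product of `f (𝓗_v)` over all internal vertices `v` of a complete `m`-ary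
tree, where `𝓗_v` is the first kind of hook length. -/
def hookProd1 {m : ℕ} {R : Type*} [CommSemiring R] (f : ℕ → R) : MTree m → R
  | leaf => 1
  | node c => f (hook1 c) * ∏ i, hookProd1 f (c i)

/-- The number of internal vertices of the `(m+1-|S|)`-ary tree `T^S` obtained from a
complete `(m+1)`-ary tree `T` by recursively deleting, for every `r ∈ S ⊆ [m]`,
the `r`-th subtree of every remaining internal vertex (the label `r ∈ {1,…,m}`
corresponds to the child with index `r - 1`, i.e. to `Fin.castSucc` of `Fin m`). -/
def internalsS {m : ℕ} (S : Finset (Fin m)) : MTree (m + 1) → ℕ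
  | leaf => 0
  | node c => 1 + ∑ i ∈ (S.image Fin.castSucc)ᶜ, internalsS S (c i)

/-- The product of `f (ℍ_v^S)` over all internal vertices `v` of a complete
`(m+1)`-ary tree, where `ℍ_v^S` is the second kind of hook length. -/
def hookProdS {m : ℕ} {R : Type*} [CommSemiring R] (S : Finset (Fin m)) (f : ℕ → R) :
    MTree (m + 1) → R
  | leaf => 1
  | node c => f (internalsS S (node c)) * ∏ i, hookProdS S f (c i)

end MTree

/-!
Write `A_n(a, b)` for `gould b a n`; the right-hand side is `A_n(x, m x)`, and the weight of a
vertex with hook length `ℍ` is `hookWeight (m - s) x ℍ`. Refine the sum by the profile `(k, j)`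
of a tree: `k` internal vertices kept in `T^S`, `j` removed. With `M = m - s`, the trees of
profile `(k, j)` weigh `A_k(x, M x) A_j(s k x, m x)` in total. Indeed, below the root hang
`M + 1` kept subtrees and `s` deleted ones, whose weights are known by induction; the
Hagen–Rothe convolution `∑ A_k(α, b) A_{n-k}(γ, b) = A_n(α + γ, b)` assembles them, and the root
weight turns `A_{k-1}((M + 1) x, M x)` into `A_k(x, M x)`. Summing over `k + j = n` with
`∑ A_k(α, b) A_{n-k}(c k + γ, b + c) = A_n(α + γ, b + c)` gives `A_n(x, m x)`. This last identity
is proved by induction on `n`: both sides are polynomials in `α` with the same value at `0` and,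
by the induction hypothesis, the same first difference.
-/

theorem Polynomial.eq_zero_of_eval_zero_of_eval_add_one {K : Type*} [CommRing K] [IsDomain K]
    [CharZero K] {p : K[X]} (h₀ : p.eval 0 = 0) (h₁ : ∀ a, p.eval (a + 1) = p.eval a) : p = 0 := by
  refine p.eq_zero_of_infinite_isRoot <|
    (Set.infinite_range_of_injective Nat.cast_injective).mono ?_
  rintro _ ⟨n, rfl⟩
  induction n with
  | zero => simpa using h₀
  | succ n ih => simpa [IsRoot, h₁] using ih

noncomputable section

/-- The Gould polynomial `A_n(a, b) = a (a + nb - 1) (a + nb - 2) ⋯ (a + nb - n + 1) / n!`,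
the coefficient of `z ^ n` in `B(z) ^ a` where `B = 1 + z B ^ b`. -/
def gould (b a : ℚ) : ℕ → ℚ
  | 0 => 1
  | n + 1 => a / (n + 1).factorial * (descPochhammer ℚ n).eval (a + (n + 1) * b - 1)

@[simp]
lemma gould_zero (b a : ℚ) : gould b a 0 = 1 := rfl

lemma gould_succ (b a : ℚ) (n : ℕ) :
    gould b a (n + 1) = a / (n + 1).factorial * (descPochhammer ℚ n).eval (a + (n + 1) * b - 1) :=
  rfl

lemma gould_zero_left (b : ℚ) (n : ℕ) : gould b 0 n = if n = 0 then 1 else 0 := by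
  cases n <;> simp [gould_succ]

lemma exists_eval_eq_gould (b : ℚ) (n : ℕ) : ∃ p : ℚ[X], ∀ a, p.eval a = gould b a n := by
  cases n with
  | zero => exact ⟨1, by simp⟩
  | succ n =>
    refine ⟨C ((n + 1).factorial : ℚ)⁻¹ * X * (descPochhammer ℚ n).comp (X + C ((n + 1) * b - 1)),
      fun a => ?_⟩
    simp only [gould_succ, eval_mul, eval_C, eval_X, eval_comp, eval_add]
    ring_nf

lemma gould_add_one_left (b a : ℚ) (n : ℕ) :
    gould b (a + 1) (n + 1) = gould b a (n + 1) + gould b (a + b) n := by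
  cases n with
  | zero => simp [gould_succ]
  | succ n =>
    have hsucc : (descPochhammer ℚ (n + 1)).eval (a + 1 + ((n + 1 : ℕ) + 1) * b - 1)
        = (a + (n + 2) * b) * (descPochhammer ℚ n).eval (a + (n + 2) * b - 1) := by
      simp only [descPochhammer_succ_left, eval_mul, eval_X, eval_comp, eval_sub, eval_one]
      push_cast
      ring_nf
    have hself : (descPochhammer ℚ (n + 1)).eval (a + ((n + 1 : ℕ) + 1) * b - 1)
        = (descPochhammer ℚ n).eval (a + (n + 2) * b - 1) * (a + (n + 2) * b - 1 - n) := by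
      rw [descPochhammer_succ_eval]
      push_cast
      ring_nf
    have hshift : (descPochhammer ℚ n).eval (a + b + (n + 1) * b - 1)
        = (descPochhammer ℚ n).eval (a + (n + 2) * b - 1) := by
      ring_nf
    rw [gould_succ, gould_succ, gould_succ, hsucc, hself, hshift, Nat.factorial_succ (n + 1)]
    push_cast
    field_simp
    ring

def gouldProfile (b c α γ : ℚ) (d : ℕ × ℕ) : ℚ :=
  gould b α d.1 * gould (b + c) (c * d.1 + γ) d.2

lemma gouldProfile_zero_zero (b c : ℚ) (d : ℕ × ℕ) :
    gouldProfile b c 0 0 d = if d = 0 then 1 else 0 := by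
  obtain ⟨k, j⟩ := d
  rcases k with _ | k <;> simp [gouldProfile, gould_zero_left, Prod.ext_iff]

theorem sum_antidiagonal_gouldProfile (b c : ℚ) (n : ℕ) (α γ : ℚ) :
    ∑ p ∈ antidiagonal n, gouldProfile b c α γ p = gould (b + c) (α + γ) n := by
  induction n generalizing α γ with
  | zero => simp [gouldProfile]
  | succ n ih =>
    choose P hP using exists_eval_eq_gould
    set D : ℚ[X] := ∑ p ∈ antidiagonal (n + 1), P b p.1 * C (gould (b + c) (c * p.1 + γ) p.2)
      - (P (b + c) (n + 1)).comp (X + C γ)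
    have hD : ∀ a, D.eval a
        = ∑ p ∈ antidiagonal (n + 1), gouldProfile b c a γ p - gould (b + c) (a + γ) (n + 1) := by
      intro a
      simp [D, eval_finsetSum, hP, gouldProfile]
    have hD₀ : D.eval 0 = 0 := by
      simp [hD, Nat.sum_antidiagonal_succ, gouldProfile, gould_zero_left]
    have hD₁ : ∀ a, D.eval (a + 1) = D.eval a := by
      intro a
      have hshift : ∑ p ∈ antidiagonal n,
          gould b (a + b) p.1 * gould (b + c) (c * ↑(p.1 + 1) + γ) p.2
            = gould (b + c) (a + γ + (b + c)) n := by
        rw [show a + γ + (b + c) = (a + b) + (c + γ) by ring, ← ih]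
        refine sum_congr rfl fun p _ => ?_
        simp only [gouldProfile]
        push_cast
        ring_nf
      simp only [hD, Nat.sum_antidiagonal_succ, gouldProfile, gould_add_one_left, add_mul,
        sum_add_distrib, add_right_comm a 1 γ, hshift, gould_zero]
      ring
    have hα := hD α
    rw [Polynomial.eq_zero_of_eval_zero_of_eval_add_one hD₀ hD₁, eval_zero] at hα
    linarith

theorem sum_antidiagonal_gould_mul_gould (b α γ : ℚ) (n : ℕ) :
    ∑ p ∈ antidiagonal n, gould b α p.1 * gould b γ p.2 = gould b (α + γ) n := by
  simpa [gouldProfile] using sum_antidiagonal_gouldProfile b 0 n α γ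

theorem sum_antidiagonal_gouldProfile_mul (b c α₁ γ₁ α₂ γ₂ : ℚ) (k j : ℕ) :
    ∑ p ∈ antidiagonal k ×ˢ antidiagonal j,
        gouldProfile b c α₁ γ₁ (p.1.1, p.2.1) * gouldProfile b c α₂ γ₂ (p.1.2, p.2.2)
      = gouldProfile b c (α₁ + α₂) (γ₁ + γ₂) (k, j) := by
  have hinner : ∀ q ∈ antidiagonal k,
      ∑ p ∈ antidiagonal j, gould (b + c) (c * q.1 + γ₁) p.1 * gould (b + c) (c * q.2 + γ₂) p.2
        = gould (b + c) (c * k + (γ₁ + γ₂)) j := by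
    intro q hq
    rw [sum_antidiagonal_gould_mul_gould, ← (mem_antidiagonal.mp hq)]
    push_cast
    ring_nf
  simp only [gouldProfile, sum_product]
  calc ∑ q ∈ antidiagonal k, ∑ p ∈ antidiagonal j,
        gould b α₁ q.1 * gould (b + c) (c * q.1 + γ₁) p.1 *
          (gould b α₂ q.2 * gould (b + c) (c * q.2 + γ₂) p.2)
      = ∑ q ∈ antidiagonal k, gould b α₁ q.1 * gould b α₂ q.2 * ∑ p ∈ antidiagonal j,
          gould (b + c) (c * q.1 + γ₁) p.1 * gould (b + c) (c * q.2 + γ₂) p.2 := by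
        simp only [mul_sum]
        exact sum_congr rfl fun q _ => sum_congr rfl fun p _ => by ring
    _ = _ := by
        rw [sum_congr rfl fun q hq => congrArg _ (hinner q hq), ← sum_mul,
          sum_antidiagonal_gould_mul_gould]

lemma gould_mul_self (μ r : ℚ) (n : ℕ) (hμ : μ * n + 1 ≠ 0) :
    gould (μ * r) r n
      = (μ * n + 1)⁻¹ * (n.factorial : ℚ)⁻¹ * ∏ j ∈ range n, ((μ * n + 1) * r - j) := by
  rw [← descPochhammer_eval_eq_prod_range]
  cases n with
  | zero => simp
  | succ n =>
    rw [gould_succ, descPochhammer_succ_left]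
    simp only [eval_mul, eval_X, eval_comp, eval_sub, eval_one]
    field_simp
    push_cast
    ring_nf

def hookWeight (M x : ℚ) (h : ℕ) : ℚ := ((M + 1) * h)⁻¹ * ((M * h + 1) * x - (h - 1))

lemma hookWeight_mul_gould (M x : ℚ) (hM : M + 1 ≠ 0) (k : ℕ) :
    hookWeight M x (k + 1) * gould (M * x) ((M + 1) * x) k = gould (M * x) x (k + 1) := by
  rw [hookWeight]
  cases k with
  | zero =>
    simp [gould_succ]
    field_simp
  | succ k =>
    have hD : (descPochhammer ℚ (k + 1)).eval (x + ((k + 1 : ℕ) + 1) * (M * x) - 1)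
        = (descPochhammer ℚ k).eval ((M + 1) * x + (k + 1) * (M * x) - 1)
          * ((M * (k + 2) + 1) * x - (k + 1)) := by
      rw [descPochhammer_succ_eval]
      push_cast
      ring_nf
    rw [gould_succ, gould_succ, hD, Nat.factorial_succ (k + 1)]
    push_cast
    field_simp
    ring

namespace MTree

lemma internals_eq_zero_iff {q : ℕ} {T : MTree q} : T.internals = 0 ↔ T = leaf := by
  cases T <;> simp [internals]

lemma finite_setOf_internals_le (q N : ℕ) : {T : MTree q | T.internals ≤ N}.Finite := by
  induction N with
  | zero => simp [internals_eq_zero_iff]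
  | succ N ih =>
    refine ((Set.finite_singleton leaf).union
      ((Set.Finite.pi fun _ => ih).image node)).subset ?_
    rintro (_ | c) hT
    · exact Or.inl rfl
    · refine Or.inr ⟨c, fun i _ => ?_, rfl⟩
      have := single_le_sum (fun j _ => Nat.zero_le _) (mem_univ i) (f := fun j => (c j).internals)
      simp only [Set.mem_ofPred_eq, internals] at hT ⊢
      omega

variable {m : ℕ} (S : Finset (Fin m))

lemma internalsS_le_internals (T : MTree (m + 1)) : T.internalsS S ≤ T.internals := by
  induction T with
  | leaf => simp [internalsS, internals]
  | node c ih =>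
    simp only [internalsS, internals, add_le_add_iff_left]
    exact (sum_le_sum fun i _ => ih i).trans (sum_le_sum_of_subset (subset_univ _))

/-- The pair `(ℍ^S, |T| - ℍ^S)` of internal vertices of `T` kept in and removed from `T^S`,
when `T` hangs at a kept position; at a deleted position all of `T` is removed. -/
def profile (kept : Bool) (T : MTree (m + 1)) : ℕ × ℕ :=
  if kept then (T.internalsS S, T.internals - T.internalsS S) else (0, T.internals)

lemma profile_fst_add_snd (kept : Bool) (T : MTree (m + 1)) :
    (profile S kept T).1 + (profile S kept T).2 = T.internals := by
  have := internalsS_le_internals S T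
  cases kept
  · simp [profile]
  · simp [profile]; omega

lemma finite_setOf_profile_eq (kept : Bool) (d : ℕ × ℕ) : {T | profile S kept T = d}.Finite :=
  (finite_setOf_internals_le _ (d.1 + d.2)).subset fun T hT => by
    simp only [Set.mem_ofPred_eq] at hT ⊢
    rw [← profile_fst_add_snd S kept, hT]

lemma finite_setOf_sum_profile_eq {q : ℕ} (χ : Fin q → Bool) (d : ℕ × ℕ) :
    {c : Fin q → MTree (m + 1) | ∑ i, profile S (χ i) (c i) = d}.Finite :=
  (Set.Finite.pi fun _ => finite_setOf_internals_le _ (d.1 + d.2)).subset fun c hc i _ => by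
    have hle : profile S (χ i) (c i) ≤ d :=
      hc ▸ single_le_sum (fun j _ => zero_le) (mem_univ i) (f := fun j => profile S (χ j) (c j))
    rw [Set.mem_ofPred_eq, ← profile_fst_add_snd S (χ i)]
    exact add_le_add hle.1 hle.2

def keptAt (i : Fin (m + 1)) : Bool := i ∉ S.image Fin.castSucc

lemma profile_true_node (c : Fin (m + 1) → MTree (m + 1)) :
    profile S true (node c) = (1, 0) + ∑ i, profile S (keptAt S i) (c i) := by
  have hfst : (∑ i, profile S (keptAt S i) (c i)).1
      = ∑ i ∈ (S.image Fin.castSucc)ᶜ, (c i).internalsS S := by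
    simp only [Prod.fst_sum, profile, keptAt, apply_ite Prod.fst, decide_eq_true_eq]
    rw [← sum_filter]
    congr 1
    ext i
    simp
  have hsum : (∑ i, profile S (keptAt S i) (c i)).1 + (∑ i, profile S (keptAt S i) (c i)).2
      = ∑ i, (c i).internals := by
    simp only [Prod.fst_sum, Prod.snd_sum, ← sum_add_distrib, profile_fst_add_snd]
  generalize ∑ i, profile S (keptAt S i) (c i) = σ at hfst hsum
  simp only [profile, internalsS, internals, if_true]
  ext <;> simp only [Prod.fst_add, Prod.snd_add] <;> omega

section

variable {R : Type*} [CommSemiring R] (f : ℕ → R)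

def profileSum (kept : Bool) (d : ℕ × ℕ) : R :=
  ∑ T ∈ (finite_setOf_profile_eq S kept d).toFinset, hookProdS S f T

def tupleSum {q : ℕ} (χ : Fin q → Bool) (d : ℕ × ℕ) : R :=
  ∑ c ∈ (finite_setOf_sum_profile_eq S χ d).toFinset, ∏ i, hookProdS S f (c i)

lemma tupleSum_zero (χ : Fin 0 → Bool) (d : ℕ × ℕ) :
    tupleSum S f χ d = if d = 0 then 1 else 0 := by
  simp only [tupleSum, univ_eq_empty, prod_empty, sum_const, nsmul_eq_mul, mul_one]
  split_ifs with hd <;> simp [hd, eq_comm]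

lemma tupleSum_succ {q : ℕ} (χ : Fin (q + 1) → Bool) (k j : ℕ) :
    tupleSum S f χ (k, j) = ∑ p ∈ antidiagonal k ×ˢ antidiagonal j,
      profileSum S f (χ 0) (p.1.1, p.2.1) * tupleSum S f (Fin.tail χ) (p.1.2, p.2.2) := by
  simp only [profileSum, tupleSum, sum_mul_sum, ← sum_product']
  rw [sum_sigma']
  refine sum_nbij' (fun c : Fin (q + 1) → MTree (m + 1) => ⟨Equiv.prodProdProdComm ℕ ℕ ℕ ℕ
      (profile S (χ 0) (c 0), ∑ i : Fin q, profile S (χ i.succ) (c i.succ)), c 0, Fin.tail c⟩)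
    (fun z => Fin.cons z.2.1 z.2.2) ?_ ?_ ?_ ?_ ?_
  · intro c hc
    rw [Set.Finite.mem_toFinset, Set.mem_ofPred_eq, Fin.sum_univ_succ] at hc
    simp [Fin.tail, ← Prod.fst_add, ← Prod.snd_add, hc]
  · rintro ⟨⟨⟨k₁, k₂⟩, ⟨j₁, j₂⟩⟩, T, c⟩ hz
    simp only [mem_sigma, mem_product, HasAntidiagonal.mem_antidiagonal, Set.Finite.mem_toFinset,
      Set.mem_ofPred_eq] at hz
    obtain ⟨⟨hk, hj⟩, hT, hc⟩ := hz
    rw [Set.Finite.mem_toFinset, Set.mem_ofPred_eq, Fin.sum_univ_succ]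
    simp only [Fin.cons_zero, Fin.cons_succ]
    rw [hT, show ∑ i, profile S (χ i.succ) (c i) = (k₂, j₂) from hc, ← hk, ← hj]
    rfl
  · intro c _
    exact Fin.cons_self_tail c
  · rintro ⟨⟨⟨k₁, k₂⟩, ⟨j₁, j₂⟩⟩, T, c⟩ hz
    simp only [mem_sigma, mem_product, HasAntidiagonal.mem_antidiagonal, Set.Finite.mem_toFinset,
      Set.mem_ofPred_eq] at hz
    obtain ⟨-, hT, hc⟩ := hz
    simp [hT, show ∑ i, profile S (χ i.succ) (c i) = (k₂, j₂) from hc]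
  · intro c _
    simp [Fin.prod_univ_succ, Fin.tail]

lemma profileSum_true_zero (j : ℕ) : profileSum S f true (0, j) = if j = 0 then 1 else 0 := by
  have hfiber : (finite_setOf_profile_eq S true (0, j)).toFinset = if j = 0 then {leaf} else ∅ := by
    ext (_ | c) <;> split_ifs <;> simp_all [profile, internalsS, internals, eq_comm]
  rw [profileSum, hfiber]
  split_ifs <;> simp [hookProdS]

lemma profile_true_node_eq_iff (c : Fin (m + 1) → MTree (m + 1)) (k j : ℕ) :
    profile S true (node c) = (k + 1, j) ↔ ∑ i, profile S (keptAt S i) (c i) = (k, j) := by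
  rw [profile_true_node, Prod.ext_iff, Prod.ext_iff]
  simp only [Prod.fst_add, Prod.snd_add]
  omega

lemma profileSum_true_succ (k j : ℕ) :
    profileSum S f true (k + 1, j) = f (k + 1) * tupleSum S f (keptAt S) (k, j) := by
  rw [profileSum, tupleSum, mul_sum]
  symm
  refine sum_bij (fun c _ => node c) (fun c hc => ?_) (fun _ _ _ _ h => node.inj h)
    (fun T hT => ?_) (fun c hc => ?_)
  · simpa [profile_true_node_eq_iff] using hc
  · cases T with
    | leaf => simp [profile, internalsS] at hT
    | node c => exact ⟨c, by simpa [profile_true_node_eq_iff] using hT, rfl⟩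
  · have : (node c).internalsS S = k + 1 := by
      have := congrArg Prod.fst ((profile_true_node_eq_iff S c k j).mpr (by simpa using hc))
      simpa [profile] using this
    simp [hookProdS, this]

lemma profileSum_false (k j : ℕ) : profileSum S f false (k, j) =
    if k = 0 then ∑ p ∈ antidiagonal j, profileSum S f true p else 0 := by
  have hfalse : ∀ T, profile S false T = (k, j) ↔ k = 0 ∧ T.internals = j := by
    simp [profile, eq_comm]
  rw [profileSum]
  split_ifs with hk
  · subst hk
    rw [← sum_fiberwise_of_maps_to (g := profile S true) (t := antidiagonal j)]
    · refine sum_congr rfl fun p hp => sum_congr ?_ fun _ _ => rfl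
      ext T
      rw [HasAntidiagonal.mem_antidiagonal] at hp
      simp only [mem_filter, Set.Finite.mem_toFinset, Set.mem_ofPred_eq, hfalse, true_and,
        and_iff_right_iff_imp]
      rintro rfl
      rw [← profile_fst_add_snd S true, hp]
    · intro T hT
      simp only [Set.Finite.mem_toFinset, Set.mem_ofPred_eq, hfalse] at hT
      rw [HasAntidiagonal.mem_antidiagonal, profile_fst_add_snd, hT.2]
  · refine sum_eq_zero fun T hT => ?_
    simp [hfalse, hk] at hT

lemma map_hookProdS {R' : Type*} [CommSemiring R'] (φ : R →+* R') (T : MTree (m + 1)) :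
    φ (hookProdS S f T) = hookProdS S (φ ∘ f) T := by
  induction T with
  | leaf => simp [hookProdS]
  | node c ih => simp [hookProdS, ih]

lemma map_profileSum {R' : Type*} [CommSemiring R'] (φ : R →+* R') (kept : Bool) (d : ℕ × ℕ) :
    φ (profileSum S f kept d) = profileSum S (φ ∘ f) kept d := by
  simp [profileSum, map_hookProdS]

lemma finsum_internals_eq_profileSum (n : ℕ) :
    ∑ᶠ T ∈ {T : MTree (m + 1) | T.internals = n}, hookProdS S f T
      = profileSum S f false (0, n) := by
  rw [finsum_mem_eq_finite_toFinset_sum _ ((finite_setOf_internals_le _ n).subset fun _ h => h.le),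
    profileSum]
  exact sum_congr (by ext; simp [profile]) fun _ _ => rfl

end

lemma sum_ite_keptAt (u v : ℚ) :
    ∑ i, (if keptAt S i then u else v) = ((m : ℚ) - #S + 1) * u + #S * v := by
  have hcard : #(S.image Fin.castSucc) = #S := card_image_of_injective _ (Fin.castSucc_injective m)
  have hle : #S ≤ m := by simpa using card_le_univ S
  have hkept : ({i | keptAt S i} : Finset (Fin (m + 1))) = (S.image Fin.castSucc)ᶜ := by
    ext
    simp [keptAt]
  have hdel : ({i | ¬keptAt S i} : Finset (Fin (m + 1))) = S.image Fin.castSucc := by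
    ext
    simp [keptAt]
  rw [sum_ite, sum_const, sum_const, hkept, hdel, card_compl, hcard, Fintype.card_fin,
    nsmul_eq_mul, nsmul_eq_mul, Nat.cast_sub (by omega)]
  push_cast
  ring

theorem tupleSum_eq_gouldProfile {f : ℕ → ℚ} {b c : ℚ} {α γ : Bool → ℚ} {N : ℕ}
    (h : ∀ kept d, d.1 + d.2 ≤ N → profileSum S f kept d = gouldProfile b c (α kept) (γ kept) d)
    {q : ℕ} (χ : Fin q → Bool) (d : ℕ × ℕ) (hd : d.1 + d.2 ≤ N) :
    tupleSum S f χ d = gouldProfile b c (∑ i, α (χ i)) (∑ i, γ (χ i)) d := by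
  induction q generalizing d with
  | zero => simp [tupleSum_zero, gouldProfile_zero_zero]
  | succ q ih =>
    obtain ⟨k, j⟩ := d
    rw [tupleSum_succ, Fin.sum_univ_succ, Fin.sum_univ_succ, ← sum_antidiagonal_gouldProfile_mul]
    refine sum_congr rfl fun p hp => ?_
    simp only [mem_product, HasAntidiagonal.mem_antidiagonal] at hp
    rw [h _ _ (by dsimp; omega), ih _ _ (by dsimp; omega)]
    rfl

lemma profileSum_false_eq_gouldProfile {f : ℕ → ℚ} {b c x : ℚ} {j : ℕ}
    (h : ∀ p ∈ antidiagonal j, profileSum S f true p = gouldProfile b c x 0 p) (k : ℕ) :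
    profileSum S f false (k, j) = gouldProfile b c 0 x (k, j) := by
  rw [profileSum_false]
  split_ifs with hk
  · rw [sum_congr rfl h, sum_antidiagonal_gouldProfile]
    simp [gouldProfile, hk]
  · simp [gouldProfile, gould_zero_left, hk]

theorem profileSum_true_hookWeight (x : ℚ) (d : ℕ × ℕ) :
    profileSum S (hookWeight ((m : ℚ) - #S) x) true d
      = gouldProfile (((m : ℚ) - #S) * x) (#S * x) x 0 d := by
  set w := hookWeight ((m : ℚ) - #S) x
  set Φ := gouldProfile (((m : ℚ) - #S) * x) (#S * x)
  induction hN : d.1 + d.2 using Nat.strong_induction_on generalizing d with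
  | _ N ih =>
    obtain ⟨_ | k, j⟩ := d
    · simp [Φ, profileSum_true_zero, gouldProfile, gould_zero_left]
    have htrue : ∀ p : ℕ × ℕ, p.1 + p.2 ≤ k + j → profileSum S w true p = Φ x 0 p :=
      fun p hp => ih _ (by dsimp at hN; omega) p rfl
    have hboth : ∀ kept (p : ℕ × ℕ), p.1 + p.2 ≤ k + j →
        profileSum S w kept p = Φ (if kept then x else 0) (if kept then 0 else x) p := by
      rintro (_ | _) ⟨k', j'⟩ hp
      · refine profileSum_false_eq_gouldProfile S (fun p' hp' => htrue p' ?_) k'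
        rw [HasAntidiagonal.mem_antidiagonal] at hp'
        dsimp at hp ⊢
        omega
      · exact htrue _ hp
    have hM : ((m : ℚ) - #S) + 1 ≠ 0 := by
      have : (#S : ℚ) ≤ m := by exact_mod_cast (card_le_univ S).trans_eq (Fintype.card_fin m)
      linarith
    rw [profileSum_true_succ, tupleSum_eq_gouldProfile S hboth (keptAt S) (k, j) le_rfl,
      sum_ite_keptAt, sum_ite_keptAt]
    simp only [Φ, w, gouldProfile, mul_zero, zero_add, add_zero]
    rw [← mul_assoc, hookWeight_mul_gould _ _ hM]
    congr 2
    push_cast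
    ring

end MTree

end

theorem hook_length_formula_second_kind'_general (m n : ℕ) (S : Finset (Fin m)) :
    (∑ᶠ T ∈ {T : MTree (m + 1) | T.internals = n},
        MTree.hookProdS S (fun h =>
          C ((((m : ℚ) - (S.card : ℚ) + 1) * (h : ℚ))⁻¹) *
            (C (((m : ℚ) - (S.card : ℚ)) * (h : ℚ) + 1) * (X : ℚ[X]) -
              C ((h : ℚ) - 1))) T)
      = C (((m : ℚ) * n + 1)⁻¹ * (n.factorial : ℚ)⁻¹) *
          ∏ j ∈ Finset.range n,
            (C ((m : ℚ) * n + 1) * (X : ℚ[X]) - C (j : ℚ)) := by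
  rw [MTree.finsum_internals_eq_profileSum]
  refine Polynomial.funext fun r => ?_
  have hweight : ⇑(evalRingHom r) ∘ (fun h : ℕ => C ((((m : ℚ) - #S + 1) * h)⁻¹) *
      (C (((m : ℚ) - #S) * h + 1) * X - C ((h : ℚ) - 1))) = hookWeight ((m : ℚ) - #S) r := by
    ext h
    simp [hookWeight]
  rw [← coe_evalRingHom, MTree.map_profileSum, hweight,
    MTree.profileSum_false_eq_gouldProfile S fun p _ => MTree.profileSum_true_hookWeight S r p,
    coe_evalRingHom]
  simp only [gouldProfile, eval_mul, eval_C, eval_prod, eval_sub, eval_X, gould_zero, one_mul,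
    Nat.cast_zero, mul_zero, zero_add, ← add_mul, sub_add_cancel]
  exact gould_mul_self _ _ _ (by positivity)

/-- **Theorem 1.2, second form (Sun–Zhang).**  For `m ≥ 1`, `n ≥ 1` and `S ⊆ [m]`
with `s = |S|`,
`∑_{T ∈ 𝒯_{n,m+1}} ∏_{v ∈ 𝓘(T)} (((m-s)ℍ_v^S + 1)x - ℍ_v^S + 1)/((m-s+1)ℍ_v^S)
  = (1/(mn+1)) ⬝ C((mn+1)x, n)` in `ℚ[x]`, where
`C(y,n) = y(y-1)⋯(y-n+1)/n!`. -/
theorem hook_length_formula_second_kind' (m n : ℕ) (hm : 1 ≤ m) (hn : 1 ≤ n)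
    (S : Finset (Fin m)) :
    (∑ᶠ T ∈ {T : MTree (m + 1) | T.internals = n},
        MTree.hookProdS S (fun h =>
          C ((((m : ℚ) - (S.card : ℚ) + 1) * (h : ℚ))⁻¹) *
            (C (((m : ℚ) - (S.card : ℚ)) * (h : ℚ) + 1) * (X : ℚ[X]) -
              C ((h : ℚ) - 1))) T)
      = C (((m : ℚ) * n + 1)⁻¹ * (n.factorial : ℚ)⁻¹) *
          ∏ j ∈ Finset.range n,
            (C ((m : ℚ) * n + 1) * (X : ℚ[X]) - C (j : ℚ)) :=
  hook_length_formula_second_kind'_general m n S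
end

section
/- For any integers m ≥ 0, n ≥ 1, any subset S of [m] = {1,2,…,m} with s = |S|, the sum over all complete (m+1)-ary trees T with n internal vertices of the product over all internal vertices v of T of (m − s − 1 + 1/ℍ_v^S) equals (1/(mn+1)) · C((mn+1)(m−s), n), where C(N, n) = N(N−1)⋯(N−n+1)/n! is the binomial coefficient evaluated at the integer N = (mn+1)(m−s). -/
open Polynomial Finset

/-! Track, for a complete `(m+1)`-ary tree `T`, both its size `|T|` (variable `t`) and the
size `|T^S|` of its pruned tree (variable `u`), and write `a = m - |S|`. Removing the root
splits `T` into `a + 1` kept subtrees and `|S|` deleted ones, and the hook length of the root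
is `1 +` the `u`-degree of the kept part. So the weighted generating function `F(u, t)`
satisfies `F = 1 + Φ (u t F^(a+1) F(1, t)^|S|)`, where `Φ` multiplies the coefficient of
`u^h` by `a - 1 + 1/h`.

Let `𝓑_q = 1 + t 𝓑_q^q`, whose powers have the Raney numbers as coefficients. The series
`𝓑_(am)(t)^r ⬝ 𝓑_(a²)(u t 𝓑_(am)(t)^(a|S|))^c` is multiplicative in `(c, r)`, and for
`(c, r) = (a, 0)` it satisfies the same recursion as `F`, because
`(a - 1 + 1/(k+1)) ⬝ [z^k] 𝓑_(a²)^(a²+a) = [z^(k+1)] 𝓑_(a²)^a`. Hence it is `F`, and at `u = 1`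
it becomes `𝓑_(am)^a`, whose `n`-th coefficient is `C(a(mn+1), n)/(mn+1)`. -/

noncomputable section

lemma Nat.cast_choose_succ_right {K : Type*} [Field K] [CharZero K] (N k : ℕ) :
    (N.choose (k + 1) : K) = (N - k) / (k + 1) * N.choose k := by
  rcases le_or_gt k N with hk | hk
  · rw [← Nat.cast_sub hk, div_mul_eq_mul_div, eq_div_iff (Nat.cast_add_one_ne_zero k),
      mul_comm ((N - k : ℕ) : K)]
    exact_mod_cast Nat.choose_succ_right_eq N k
  · simp [Nat.choose_eq_zero_of_lt hk, Nat.choose_eq_zero_of_lt (hk.trans (Nat.lt_succ_self k))]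

lemma Finset.Nat.sum_antidiagonal_antidiagonal_transpose {M : Type*} [AddCommMonoid M] (n : ℕ)
    (f : ℕ × ℕ → ℕ × ℕ → M) :
    ∑ p ∈ antidiagonal n, ∑ x ∈ antidiagonal p.1, ∑ y ∈ antidiagonal p.2, f x y
      = ∑ p ∈ antidiagonal n, ∑ x ∈ antidiagonal p.1, ∑ y ∈ antidiagonal p.2,
          f (x.1, y.1) (x.2, y.2) := by
  simp_rw [← sum_product', sum_sigma']
  let τ : (Σ _ : ℕ × ℕ, (ℕ × ℕ) × (ℕ × ℕ)) → Σ _ : ℕ × ℕ, (ℕ × ℕ) × (ℕ × ℕ) :=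
    fun w => ⟨(w.2.1.1 + w.2.2.1, w.2.1.2 + w.2.2.2), (w.2.1.1, w.2.2.1), (w.2.1.2, w.2.2.2)⟩
  refine sum_nbij' τ τ ?_ ?_ ?_ ?_ fun _ _ => rfl
  all_goals
    rintro ⟨⟨i, j⟩, ⟨a, b⟩, ⟨c, e⟩⟩
    simp only [τ, mem_sigma, mem_product, HasAntidiagonal.mem_antidiagonal, and_true,
      Sigma.mk.injEq, heq_eq_eq, Prod.mk.injEq]
    omega

lemma PowerSeries.coeff_prod_congr {R ι : Type*} [CommSemiring R] (s : Finset ι)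
    {f g : ι → PowerSeries R} {n : ℕ} (h : ∀ i ∈ s, ∀ j ≤ n, coeff j (f i) = coeff j (g i)) :
    coeff n (∏ i ∈ s, f i) = coeff n (∏ i ∈ s, g i) := by
  classical
  simp only [coeff_prod]
  refine sum_congr rfl fun l hl => prod_congr rfl fun i hi => h i hi _ ?_
  rw [mem_finsuppAntidiag] at hl
  exact hl.1 ▸ single_le_sum (fun _ _ => Nat.zero_le _) hi

def Polynomial.scaleCoeffs {R : Type*} [CommSemiring R] (ρ : ℕ → R) : R[X] →ₗ[R] R[X] :=
  lsum fun j => ρ j • monomial j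

lemma Polynomial.scaleCoeffs_C_mul_X_pow {R : Type*} [CommSemiring R] (ρ : ℕ → R) (r : R)
    (j : ℕ) : scaleCoeffs ρ (C r * X ^ j) = C (ρ j * r) * X ^ j := by
  rw [C_mul_X_pow_eq_monomial, C_mul_X_pow_eq_monomial]
  simp [scaleCoeffs, lsum_apply, sum_monomial_index, smul_monomial]

/-- `raney q p n = p/(qn+p) ⬝ C(qn+p, n)` is the coefficient of `tⁿ` in `𝓑_q(t)^p`, where
`𝓑_q = 1 + t 𝓑_q^q`. The case `n = 0` is split off because the formula gives `0/0 = 0`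
at `p = n = 0`. -/
def raney (q p n : ℕ) : ℚ :=
  if n = 0 then 1 else p / (q * n + p : ℕ) * (q * n + p).choose n

@[simp]
lemma raney_zero_right (q p : ℕ) : raney q p 0 = 1 := if_pos rfl

lemma raney_zero_left (q n : ℕ) : raney q 0 n = if n = 0 then 1 else 0 := by
  unfold raney; split_ifs <;> simp

lemma raney_of_ne_zero (q : ℕ) {p : ℕ} (hp : p ≠ 0) (n : ℕ) :
    raney q p n = p / (q * n + p : ℕ) * (q * n + p).choose n := by
  unfold raney
  split_ifs with hn
  · subst hn; simp [hp]
  · rfl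

lemma raney_succ_succ (q p n : ℕ) :
    raney q (p + 1) (n + 1) = raney q p (n + 1) + raney q (p + q) n := by
  obtain ⟨N, hN⟩ : ∃ N, q * (n + 1) + p = N := ⟨_, rfl⟩
  rcases N.eq_zero_or_pos with rfl | hNpos
  · obtain ⟨rfl, rfl⟩ : q = 0 ∧ p = 0 := by constructor <;> nlinarith
    cases n <;> simp [raney, Nat.choose_eq_zero_of_lt]
  have hNq : (N : ℚ) = q * (n + 1) + p := by rw [← hN]; push_cast; ring
  have hsucc : raney q (p + 1) (n + 1) = (p + 1) / (n + 1) * N.choose n := by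
    have hC : ((N + 1).choose (n + 1) : ℚ) = (N + 1) / (n + 1) * N.choose n := by
      rw [div_mul_eq_mul_div, eq_div_iff (by positivity)]
      exact_mod_cast (Nat.add_one_mul_choose_eq N n).symm
    rw [raney_of_ne_zero q p.succ_ne_zero, show q * (n + 1) + (p + 1) = N + 1 by omega, hC]
    push_cast
    field_simp
  have hp : raney q p (n + 1) = p / N * ((N - n) / (n + 1) * N.choose n) := by
    simp [raney, ← Nat.cast_choose_succ_right, hN]
  have hpq : raney q (p + q) n = (p + q) / N * N.choose n := by
    rw [raney_of_ne_zero q (by intro h; nlinarith), show q * n + (p + q) = N by rw [← hN]; ring]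
    push_cast; ring
  rw [hsucc, hp, hpq]
  field_simp
  linear_combination (N.choose n : ℚ) * hNq

/-- The coefficients of `𝓑_(q+d)(t)^r ⬝ 𝓑_q(t 𝓑_(q+d)(t)^d)^c = 𝓑_(q+d)(t)^(c+r)`. -/
theorem raney_subst (q d n c r : ℕ) :
    ∑ x ∈ antidiagonal n, raney q c x.1 * raney (q + d) (d * x.1 + r) x.2
      = raney (q + d) (c + r) n := by
  induction n generalizing c r with
  | zero => simp
  | succ n ih =>
    induction c generalizing r with
    | zero => simp [Nat.sum_antidiagonal_succ, raney_zero_left]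
    | succ c ihc =>
      have ihc := ihc r
      have ih' := ih (c + q) (d + r)
      rw [Nat.sum_antidiagonal_succ] at ihc ⊢
      simp only [raney_succ_succ, add_mul, sum_add_distrib, raney_zero_right] at ihc ⊢
      rw [add_right_comm c 1 r, raney_succ_succ, ← ihc,
        show c + r + (q + d) = c + q + (d + r) by ring, ← ih']
      simp only [mul_add, mul_one, add_assoc, add_comm d]

theorem raney_add (q p r n : ℕ) :
    ∑ x ∈ antidiagonal n, raney q p x.1 * raney q r x.2 = raney q (p + r) n := by
  simpa using raney_subst q 0 n p r

theorem hook_mul_raney_sq (a k : ℕ) :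
    ((a : ℚ) - 1 + ((k + 1 : ℕ) : ℚ)⁻¹) * raney (a * a) (a * a + a) k
      = raney (a * a) a (k + 1) := by
  rcases a.eq_zero_or_pos with rfl | ha
  · cases k <;> simp [raney_zero_left]
  obtain ⟨N, hN⟩ : ∃ N, a * a * (k + 1) + a = N := ⟨_, rfl⟩
  have hNq : (N : ℚ) = a * a * (k + 1) + a := by rw [← hN]; push_cast; ring
  rw [raney_of_ne_zero _ (by positivity), raney_of_ne_zero _ ha.ne', hN,
    show a * a * k + (a * a + a) = N by rw [← hN]; ring, Nat.cast_choose_succ_right]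
  push_cast
  field_simp
  rw [hNq]
  ring

open Nat in
theorem raney_mul_left_eq_prod (a m n : ℕ) :
    raney (a * m) a n
      = ((m : ℚ) * n + 1)⁻¹ * (n ! : ℚ)⁻¹ * ∏ j ∈ range n, (((m : ℚ) * n + 1) * a - j) := by
  rcases a.eq_zero_or_pos with rfl | ha
  · cases n <;> simp [raney_zero_left, prod_range_succ']
  have hN : ((a * m * n + a : ℕ) : ℚ) = ((m : ℚ) * n + 1) * a := by push_cast; ring
  rw [raney_of_ne_zero _ ha.ne', Nat.cast_choose_eq_descPochhammer_div, hN,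
    descPochhammer_eval_eq_prod_range]
  field_simp

section RaneyComp

variable (q d : ℕ)

/-- The series `𝓑_(q+d)(t)^r ⬝ 𝓑_q(u t 𝓑_(q+d)(t)^d)^c` in `t`, with `u` the polynomial
variable. -/
def raneyComp (c r : ℕ) : PowerSeries ℚ[X] :=
  PowerSeries.mk fun n =>
    ∑ x ∈ antidiagonal n, C (raney q c x.1 * raney (q + d) (d * x.1 + r) x.2) * X ^ x.1

lemma coeff_raneyComp (c r n : ℕ) :
    PowerSeries.coeff n (raneyComp q d c r)
      = ∑ x ∈ antidiagonal n, C (raney q c x.1 * raney (q + d) (d * x.1 + r) x.2) * X ^ x.1 :=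
  PowerSeries.coeff_mk _ _

lemma coeff_raneyComp_zero_left (r n : ℕ) :
    PowerSeries.coeff n (raneyComp q d 0 r) = C (raney (q + d) r n) := by
  rw [coeff_raneyComp, sum_eq_single (0, n)] <;> simp +contextual [raney_zero_left]
  intro a b hab hne ha
  exact absurd (by omega) (hne ha)

lemma eval_one_coeff_raneyComp (c r n : ℕ) :
    (PowerSeries.coeff n (raneyComp q d c r)).eval 1 = raney (q + d) (c + r) n := by
  simp [coeff_raneyComp, eval_finsetSum, raney_subst]

lemma map_eval_one_raneyComp (c r : ℕ) :
    PowerSeries.map (C.comp (evalRingHom 1)) (raneyComp q d c r) = raneyComp q d 0 (c + r) := by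
  ext1 n
  rw [PowerSeries.coeff_map, coeff_raneyComp_zero_left, RingHom.comp_apply, coe_evalRingHom,
    eval_one_coeff_raneyComp]

lemma raneyComp_mul (c r c' r' : ℕ) :
    raneyComp q d c r * raneyComp q d c' r' = raneyComp q d (c + c') (r + r') := by
  refine PowerSeries.ext fun n => ?_
  rw [PowerSeries.coeff_mul]
  simp only [coeff_raneyComp, sum_mul_sum]
  rw [Finset.Nat.sum_antidiagonal_antidiagonal_transpose n fun x y =>
    C (raney q c x.1 * raney (q + d) (d * x.1 + r) x.2) * X ^ x.1 *
      (C (raney q c' y.1 * raney (q + d) (d * y.1 + r') y.2) * X ^ y.1)]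
  refine sum_congr rfl fun p _ => ?_
  have inner : ∀ x ∈ antidiagonal p.1,
      ∑ y ∈ antidiagonal p.2,
        C (raney q c x.1 * raney (q + d) (d * x.1 + r) y.1) * X ^ x.1 *
          (C (raney q c' x.2 * raney (q + d) (d * x.2 + r') y.2) * X ^ x.2)
        = C (raney q c x.1 * raney q c' x.2 * raney (q + d) (d * p.1 + (r + r')) p.2)
            * X ^ p.1 := by
    intro x hx
    rw [HasAntidiagonal.mem_antidiagonal] at hx
    rw [← hx, show d * (x.1 + x.2) + (r + r') = d * x.1 + r + (d * x.2 + r') by ring,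
      ← raney_add, mul_sum, map_sum, sum_mul]
    refine sum_congr rfl fun y _ => ?_
    simp only [map_mul, pow_add]
    ring
  rw [sum_congr rfl inner, ← sum_mul, ← map_sum, ← sum_mul, raney_add]

lemma raneyComp_zero_zero : raneyComp q d 0 0 = 1 := by
  ext n
  rw [coeff_raneyComp_zero_left, raney_zero_left, PowerSeries.coeff_one]
  split_ifs <;> simp

lemma raneyComp_pow (c r j : ℕ) : raneyComp q d c r ^ j = raneyComp q d (j * c) (j * r) := by
  induction j with
  | zero => simp [raneyComp_zero_zero]
  | succ j ih => rw [pow_succ, ih, raneyComp_mul, add_one_mul, add_one_mul]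

lemma prod_ite_raneyComp {ι : Type*} [Fintype ι] [DecidableEq ι] (D : Finset ι) (a : ℕ) :
    ∏ i, (if i ∈ D then raneyComp q d a 0 else raneyComp q d 0 a)
      = raneyComp q d (#D * a) (#Dᶜ * a) := by
  rw [prod_ite, prod_const, prod_const, filter_mem_eq_inter, univ_inter, filter_notMem_eq_sdiff,
    ← compl_eq_univ_sdiff, raneyComp_pow, raneyComp_pow, raneyComp_mul, mul_zero, mul_zero,
    add_zero, zero_add]

lemma scaleCoeffs_X_mul_coeff_raneyComp (a n : ℕ) :
    scaleCoeffs (fun h => (a : ℚ) - 1 + (h : ℚ)⁻¹)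
        (X * PowerSeries.coeff n (raneyComp (a * a) d (a * a + a) d))
      = PowerSeries.coeff (n + 1) (raneyComp (a * a) d a 0) := by
  rw [coeff_raneyComp, coeff_raneyComp, Nat.sum_antidiagonal_succ, mul_sum, map_sum]
  simp only [mul_zero, raney_zero_left, if_neg (Nat.succ_ne_zero n), map_zero, zero_mul,
    zero_add]
  refine sum_congr rfl fun x _ => ?_
  rw [mul_comm X, mul_assoc, ← pow_succ, scaleCoeffs_C_mul_X_pow, ← mul_assoc,
    hook_mul_raney_sq, show d * (x.1 + 1) = d * x.1 + d by ring, add_zero]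

end RaneyComp

namespace MTree

variable {k : ℕ}

def treesHeightLe (k : ℕ) : ℕ → Finset (MTree k)
  | 0 => {leaf}
  | n + 1 => cons leaf
      ((Fintype.piFinset fun _ => treesHeightLe k n).map ⟨node, fun _ _ h => node.inj h⟩)
      (by simp)

lemma internals_le_of_sum_le {c : Fin k → MTree k} {n : ℕ} (h : ∑ i, (c i).internals ≤ n)
    (i : Fin k) : (c i).internals ≤ n :=
  (single_le_sum (fun _ _ => Nat.zero_le _) (mem_univ i)).trans h

lemma mem_treesHeightLe_of_internals_le {n : ℕ} {T : MTree k} (h : T.internals ≤ n) :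
    T ∈ treesHeightLe k n := by
  induction n generalizing T with
  | zero => cases T <;> simp_all [treesHeightLe, internals]
  | succ n ih =>
    cases T with
    | leaf => simp [treesHeightLe]
    | node c =>
      simp only [internals] at h
      simp only [treesHeightLe, mem_cons, mem_map, Fintype.mem_piFinset]
      exact .inr ⟨c, fun i => ih (internals_le_of_sum_le (by omega) i), rfl⟩

def treesWith (k n : ℕ) : Finset (MTree k) := (treesHeightLe k n).filter (·.internals = n)

lemma mem_treesWith {n : ℕ} {T : MTree k} : T ∈ treesWith k n ↔ T.internals = n := by
  simpa [treesWith] using fun h => mem_treesHeightLe_of_internals_le h.le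

lemma treesWith_zero (k : ℕ) : treesWith k 0 = {leaf} := rfl

lemma coe_treesWith (k n : ℕ) : (treesWith k n : Set (MTree k)) = {T | T.internals = n} := by
  ext T; simp [mem_treesWith]

lemma filter_treesHeightLe_internals_eq {j n : ℕ} (h : j ≤ n) :
    (treesHeightLe k n).filter (·.internals = j) = treesWith k j := by
  ext T
  simpa [mem_treesWith] using fun hT => mem_treesHeightLe_of_internals_le (hT ▸ h)

def childTuples (k n : ℕ) : Finset (Fin k → MTree k) :=
  (Fintype.piFinset fun _ => treesHeightLe k n).filter fun c => ∑ i, (c i).internals = n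

lemma sum_treesWith_succ {M : Type*} [AddCommMonoid M] (F : MTree k → M) (n : ℕ) :
    ∑ T ∈ treesWith k (n + 1), F T = ∑ c ∈ childTuples k n, F (node c) := by
  have : treesWith k (n + 1) = (childTuples k n).map ⟨node, fun _ _ h => node.inj h⟩ := by
    ext T
    cases T with
    | leaf => simp [mem_treesWith, internals]
    | node c =>
      simp only [mem_treesWith, internals, childTuples, mem_map, mem_filter, Fintype.mem_piFinset]
      constructor
      · intro h
        exact ⟨c, ⟨fun i => mem_treesHeightLe_of_internals_le
          (internals_le_of_sum_le (by omega) i), by omega⟩, rfl⟩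
      · rintro ⟨c', ⟨-, h⟩, he⟩
        cases node.inj he
        omega
  rw [this, sum_map]
  rfl

def treeSeries {R : Type*} [CommSemiring R] (f : MTree k → R) : PowerSeries R :=
  PowerSeries.mk fun n => ∑ T ∈ treesWith k n, f T

lemma coeff_prod_treeSeries {R : Type*} [CommSemiring R] (f : Fin k → MTree k → R) (n : ℕ) :
    PowerSeries.coeff n (∏ i, treeSeries (f i)) = ∑ c ∈ childTuples k n, ∏ i, f i (c i) := by
  classical
  rw [PowerSeries.coeff_prod_congr (g := fun i =>
      ∑ T ∈ treesHeightLe k n, PowerSeries.monomial T.internals (f i T)) univ]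
  · simp_rw [prod_univ_sum, PowerSeries.prod_monomial, map_sum, PowerSeries.coeff_monomial,
      childTuples, sum_filter, eq_comm (a := n)]
  · intro i _ j hj
    simp [treeSeries, PowerSeries.coeff_monomial, ← sum_filter, eq_comm (a := j),
      filter_treesHeightLe_internals_eq hj]

variable {m : ℕ} (S : Finset (Fin m)) (ρ : ℕ → ℚ)

def hookWeight (T : MTree (m + 1)) : ℚ[X] :=
  C (T.hookProdS S ρ) * X ^ T.internalsS S

lemma hookWeight_node (c : Fin (m + 1) → MTree (m + 1)) :
    hookWeight S ρ (node c) = scaleCoeffs ρ (X * ∏ i, C ((c i).hookProdS S ρ) *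
      if i ∈ (S.image Fin.castSucc)ᶜ then X ^ (c i).internalsS S else 1) := by
  rw [prod_mul_distrib, ← map_prod, prod_ite_mem, univ_inter, prod_pow_eq_pow_sum,
    mul_left_comm, ← pow_succ', scaleCoeffs_C_mul_X_pow, hookWeight, hookProdS, internalsS,
    add_comm 1]

lemma coeff_succ_treeSeries_hookWeight (n : ℕ) :
    PowerSeries.coeff (n + 1) (treeSeries (hookWeight S ρ))
      = scaleCoeffs ρ (X * PowerSeries.coeff n (∏ i, treeSeries fun T => C (T.hookProdS S ρ) *
          if i ∈ (S.image Fin.castSucc)ᶜ then X ^ T.internalsS S else 1)) := by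
  rw [coeff_prod_treeSeries, mul_sum, map_sum]
  simp only [treeSeries, PowerSeries.coeff_mk, sum_treesWith_succ, hookWeight_node]

lemma map_eval_one_treeSeries_hookWeight :
    PowerSeries.map (C.comp (evalRingHom 1)) (treeSeries (hookWeight S ρ))
      = treeSeries fun T => C (T.hookProdS S ρ) := by
  ext1 n
  simp [treeSeries, hookWeight]

theorem treeSeries_hookWeight :
    treeSeries (hookWeight S fun h => ((m - #S : ℕ) : ℚ) - 1 + (h : ℚ)⁻¹)
      = raneyComp ((m - #S) * (m - #S)) ((m - #S) * #S) (m - #S) 0 := by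
  have hDc : #(S.image Fin.castSucc) = #S := card_image_of_injective _ (Fin.castSucc_injective m)
  have hD : #(S.image Fin.castSucc)ᶜ = m - #S + 1 := by
    rw [card_compl, hDc, Fintype.card_fin]
    have := card_finset_fin_le S
    omega
  generalize m - #S = a at hD ⊢
  set D := (S.image Fin.castSucc)ᶜ
  set ρ : ℕ → ℚ := fun h => (a : ℚ) - 1 + (h : ℚ)⁻¹
  refine PowerSeries.ext fun n => ?_
  induction n using Nat.strong_induction_on with
  | _ n ih =>
  cases n with
  | zero => simp [treeSeries, treesWith_zero, hookWeight, hookProdS, internalsS, coeff_raneyComp]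
  | succ n =>
    have factors : ∀ i, ∀ j ≤ n,
        PowerSeries.coeff j (treeSeries fun T => C (T.hookProdS S ρ) *
          if i ∈ D then X ^ T.internalsS S else 1)
        = PowerSeries.coeff j (if i ∈ D then raneyComp (a * a) (a * #S) a 0
            else raneyComp (a * a) (a * #S) 0 a) := by
      intro i j hj
      split_ifs
      · exact ih j (by omega)
      · simp only [mul_one]
        rw [← map_eval_one_treeSeries_hookWeight, PowerSeries.coeff_map, ih j (by omega),
          ← PowerSeries.coeff_map, map_eval_one_raneyComp, add_zero]
    rw [coeff_succ_treeSeries_hookWeight, PowerSeries.coeff_prod_congr _ fun i _ => factors i,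
      prod_ite_raneyComp, hD, compl_compl, hDc, ← scaleCoeffs_X_mul_coeff_raneyComp]
    congr 4 <;> ring

end MTree

end

theorem hook_length_second_kind_corollary₁_general (m n : ℕ)
    (S : Finset (Fin m)) :
    (∑ᶠ T ∈ {T : MTree (m + 1) | T.internals = n},
        MTree.hookProdS S (fun h =>
          (m : ℚ) - (S.card : ℚ) - 1 + ((h : ℚ))⁻¹) T)
      = ((m : ℚ) * n + 1)⁻¹ * (n.factorial : ℚ)⁻¹ *
          ∏ j ∈ Finset.range n,
            (((m : ℚ) * n + 1) * ((m : ℚ) - (S.card : ℚ)) - (j : ℚ)) := by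
  have hS := card_finset_fin_le S
  rw [← Nat.cast_sub hS, ← MTree.coe_treesWith, finsum_mem_coe_finset, ← raney_mul_left_eq_prod]
  calc _ = (PowerSeries.coeff n (MTree.treeSeries (MTree.hookWeight S
          fun h => ((m - #S : ℕ) : ℚ) - 1 + (h : ℚ)⁻¹))).eval 1 := by
        simp [MTree.treeSeries, MTree.hookWeight, eval_finsetSum]
    _ = raney ((m - #S) * (m - #S) + (m - #S) * #S) (m - #S + 0) n := by
        rw [MTree.treeSeries_hookWeight, eval_one_coeff_raneyComp]
    _ = raney ((m - #S) * m) (m - #S) n := by rw [← mul_add, Nat.sub_add_cancel hS, add_zero]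

/-- **Corollary (x = m-s-1 in Theorem 1.2).**  For `m ≥ 0`, `n ≥ 1` and `S ⊆ [m]`
with `s = |S|`,
`∑_{T ∈ 𝒯_{n,m+1}} ∏_{v ∈ 𝓘(T)} (m - s - 1 + 1/ℍ_v^S)
  = (1/(mn+1)) ⬝ C((mn+1)(m-s), n)`, where `C(N,n) = N(N-1)⋯(N-n+1)/n!`. -/
theorem hook_length_second_kind_corollary₁ (m n : ℕ) (hn : 1 ≤ n)
    (S : Finset (Fin m)) :
    (∑ᶠ T ∈ {T : MTree (m + 1) | T.internals = n},
        MTree.hookProdS S (fun h =>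
          (m : ℚ) - (S.card : ℚ) - 1 + ((h : ℚ))⁻¹) T)
      = ((m : ℚ) * n + 1)⁻¹ * (n.factorial : ℚ)⁻¹ *
          ∏ j ∈ Finset.range n,
            (((m : ℚ) * n + 1) * ((m : ℚ) - (S.card : ℚ)) - (j : ℚ)) :=
  hook_length_second_kind_corollary₁_general m n S
end

section
/- For any integer m ≥ 2, let 𝓗_m(x;t) = 1 + Σ_{n≥1} 𝓗_{n,m}(x) t^n be the generating function of the hook length polynomials 𝓗_{n,m}(x) = Σ_{T ∈ 𝒯_{n,m}} ∏_{v ∈ 𝓘(T)} ((m·𝓗_v − 1)x − 𝓗_v + 1)/((m−1)·𝓗_v), regarded as a formal power series in t with coefficients in ℚ(x). Then 𝓗_m(x;t) satisfies the differential equation 𝓗'_m(x;t) = x·𝓗_m(x;t)^{m+1} + (mx−1)·t·𝓗_m(x;t)^m·𝓗'_m(x;t), where the prime denotes the formal derivative with respect to t. -/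
open Polynomial Finset

open scoped PowerSeries

/-- The hook length polynomial
`𝓗_{n,m}(x) = Σ_{T ∈ 𝒯_{n,m}} ∏_{v ∈ 𝓘(T)} ((m𝓗_v - 1)x - 𝓗_v + 1)/((m-1)𝓗_v)`
(for `n = 0` the only tree is the single external vertex, so `𝓗_{0,m}(x) = 1`). -/
noncomputable def hookPoly (m n : ℕ) : Polynomial ℚ :=
  ∑ᶠ T ∈ {T : MTree m | T.internals = n},
    MTree.hookProd1 (fun h =>
      C ((((m : ℚ) - 1) * (h : ℚ))⁻¹) *
        (C ((m : ℚ) * (h : ℚ) - 1) * (X : ℚ[X]) - C ((h : ℚ) - 1))) T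

/-- The generating function `𝓗_m(x;t) = 1 + Σ_{n≥1} 𝓗_{n,m}(x) tⁿ`, as a formal
power series in `t` with polynomial coefficients. -/
noncomputable def hookGF (m : ℕ) : PowerSeries (Polynomial ℚ) :=
  PowerSeries.mk (hookPoly m)

/-! Removing the rightmost subtree of the root, a tree with `n + 1` internal vertices is a root of
hook length `a + 1` together with an ordered `(m - 1)`-tuple of trees with `a` internal vertices in
total and one tree with `b` internal vertices, `a + b = n`. Hence
`[tⁿ⁺¹] H = ∑_{a+b=n} f(a + 1) [tᵃ] H^{m-1} [tᵇ] H` for the hook factor `f`. For `m = p + 1` and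
`h ≠ 0`, `f h = A - B / h` with `A = ((p + 1) x - 1) / p` and `B = (x - 1) / p`, and `tᵃ⁺¹ / (a + 1)`
is the integral of `tᵃ`, so `H = 1 + A t H^m - B H K` where `K' = H^p`, `K(0) = 0`. Differentiating,
multiplying by `H` and using the functional equation to eliminate `B H K` leaves
`H' = (A - B) H^{m+1} + p A t H^m H'`, with `A - B = x` and `p A = m x - 1`. -/

section GradedGF

variable {α R : Type*} [CommSemiring R] (size : α → ℕ) (w : α → R)

noncomputable def gradedGF : R⟦X⟧ :=
  PowerSeries.mk fun n => ∑ᶠ x ∈ {x | size x = n}, w x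

@[simp]
theorem coeff_gradedGF (n : ℕ) :
    PowerSeries.coeff n (gradedGF size w) = ∑ᶠ x ∈ {x | size x = n}, w x :=
  PowerSeries.coeff_mk _ _

variable {size}

theorem finite_setOf_sum_eq {l : ℕ} (hfin : ∀ k ≤ l, {x | size x = k}.Finite) (j : ℕ) :
    {c : Fin j → α | ∑ i, size (c i) = l}.Finite := by
  refine (Set.Finite.pi' fun _ => (Set.finite_Iic l).biUnion hfin).subset fun c hc i => ?_
  simp only [Set.mem_iUnion, Set.mem_ofPred_eq, Set.mem_Iic, exists_prop, exists_eq_right']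
  exact hc ▸ single_le_sum (f := fun i => size (c i)) (fun i _ => Nat.zero_le _) (mem_univ i)

theorem finsum_snoc_eq_sum_antidiagonal (hfin : ∀ n, {x | size x = n}.Finite) (F : ℕ → R)
    (j l : ℕ) :
    ∑ᶠ c ∈ {c : Fin (j + 1) → α | ∑ i, size (c i) = l},
        F (∑ i : Fin j, size (c i.castSucc)) * ∏ i, w (c i) =
      ∑ ab ∈ antidiagonal l, F ab.1 *
        (∑ᶠ c ∈ {c : Fin j → α | ∑ i, size (c i) = ab.1}, ∏ i, w (c i)) *
          ∑ᶠ x ∈ {x | size x = ab.2}, w x := by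
  have htuples (k n : ℕ) := finite_setOf_sum_eq (l := n) (fun i _ => hfin i) k
  simp only [finsum_mem_eq_finite_toFinset_sum _ (htuples _ _),
    finsum_mem_eq_finite_toFinset_sum _ (hfin _), mul_assoc]
  simp only [sum_mul_sum]
  simp only [mul_sum, ← sum_product']
  rw [sum_sigma']
  refine sum_nbij' (fun c => ⟨(∑ i : Fin j, size (c i.castSucc), size (c (Fin.last j))),
      (Fin.init c, c (Fin.last j))⟩) (fun σ => Fin.snoc σ.2.1 σ.2.2) ?_ ?_ ?_ ?_ ?_
  · intro c hc
    simp_all [Fin.sum_univ_castSucc, Fin.init]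
  · rintro ⟨⟨a, b⟩, c, x⟩ h
    simp_all [Fin.sum_univ_castSucc]
  · intro c _
    simp
  · rintro ⟨⟨a, b⟩, c, x⟩ h
    simp_all
  · intro c _
    simp [Fin.prod_univ_castSucc, Fin.init]

theorem coeff_gradedGF_pow (hfin : ∀ n, {x | size x = n}.Finite) (j l : ℕ) :
    PowerSeries.coeff l (gradedGF size w ^ j) =
      ∑ᶠ c ∈ {c : Fin j → α | ∑ i, size (c i) = l}, ∏ i, w (c i) := by
  induction j generalizing l with
  | zero =>
    rcases eq_or_ne l 0 with rfl | hl
    · simp [finsum_unique]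
    · simp [PowerSeries.coeff_one, hl, hl.symm]
  | succ j ih =>
    simpa [pow_succ, PowerSeries.coeff_mul, ih] using
      (finsum_snoc_eq_sum_antidiagonal w hfin 1 j l).symm

end GradedGF

namespace PowerSeries

variable {R : Type*} [CommSemiring R] [Algebra ℚ R]

noncomputable def integral (f : R⟦X⟧) : R⟦X⟧ :=
  mk fun
    | 0 => 0
    | n + 1 => ((n + 1 : ℕ) : ℚ)⁻¹ • coeff n f

@[simp]
theorem constantCoeff_integral (f : R⟦X⟧) : constantCoeff (integral f) = 0 := by
  rw [← coeff_zero_eq_constantCoeff_apply, integral, coeff_mk]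

theorem coeff_succ_integral (f : R⟦X⟧) (n : ℕ) :
    coeff (n + 1) (integral f) = ((n + 1 : ℕ) : ℚ)⁻¹ • coeff n f := by
  rw [integral, coeff_mk]

@[simp]
theorem derivative_integral (f : R⟦X⟧) : d⁄dX R (integral f) = f := by
  ext n
  rw [coeff_derivative, coeff_succ_integral, ← Nat.cast_succ, mul_comm, ← nsmul_eq_mul,
    ← Nat.cast_smul_eq_nsmul ℚ, smul_smul, mul_inv_cancel₀ (by positivity), one_smul]

theorem coeff_succ_integral_mul (f g : R⟦X⟧) (n : ℕ) :
    coeff (n + 1) (integral f * g) =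
      ∑ ab ∈ antidiagonal n, ((ab.1 + 1 : ℕ) : ℚ)⁻¹ • (coeff ab.1 f * coeff ab.2 g) := by
  rw [coeff_mul, Nat.sum_antidiagonal_succ]
  simp [coeff_succ_integral]

theorem derivative_eq_of_eq_one_add_X_mul_pow {R : Type*} [CommRing R] (p : ℕ) (a b : R)
    {H K : R⟦X⟧} (hK : d⁄dX R K = H ^ p)
    (hH : H = 1 + C a * X * H ^ (p + 1) - C b * (H * K)) :
    d⁄dX R H = C (a - b) * H ^ (p + 2) + C (p * a) * X * H ^ (p + 1) * d⁄dX R H := by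
  have hH' := congrArg (d⁄dX R) hH
  simp only [map_add, map_sub, Derivation.leibniz, Derivation.leibniz_pow, derivative_C,
    derivative_X, Derivation.map_one_eq_zero, hK, smul_eq_mul, nsmul_eq_mul, Nat.add_sub_cancel,
    Nat.cast_succ] at hH'
  simp only [map_sub, map_mul, map_natCast]
  linear_combination H * hH' - d⁄dX R H * hH

end PowerSeries

namespace MTree

variable {m : ℕ}

theorem setOf_internals_eq_zero : {T : MTree m | T.internals = 0} = {leaf} := by
  ext (_ | c) <;> simp [internals]

theorem setOf_internals_eq_succ (n : ℕ) :
    {T : MTree m | T.internals = n + 1} = node '' {c | ∑ i, (c i).internals = n} := by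
  ext (_ | c)
  · simp [internals]
  · simp only [internals, Set.mem_ofPred_eq, Set.mem_image, node.injEq, exists_eq_right]
    omega

theorem node_injective : Function.Injective (node : (Fin m → MTree m) → MTree m) :=
  fun _ _ h => node.inj h

theorem finite_setOf_internals_eq (n : ℕ) : {T : MTree m | T.internals = n}.Finite := by
  induction n using Nat.strong_induction_on with
  | _ n ih =>
    cases n with
    | zero => simp [setOf_internals_eq_zero]
    | succ n =>
      rw [setOf_internals_eq_succ]
      exact (finite_setOf_sum_eq (fun k hk => ih k (by omega)) m).image node

theorem hook1_eq {j : ℕ} (c : Fin (j + 1) → MTree (j + 1)) :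
    hook1 c = (∑ i : Fin j, (c i.castSucc).internals) + 1 := by
  rw [hook1, sum_filter, Fin.sum_univ_castSucc]
  simp [add_comm]

noncomputable def hookProdGF {R : Type*} [CommSemiring R] (m : ℕ) (f : ℕ → R) : R⟦X⟧ :=
  gradedGF internals (hookProd1 f : MTree m → R)

theorem coeff_zero_hookProdGF {R : Type*} [CommSemiring R] (f : ℕ → R) :
    PowerSeries.coeff 0 (hookProdGF m f) = 1 := by
  simp [hookProdGF, setOf_internals_eq_zero, hookProd1]

theorem coeff_succ_hookProdGF {R : Type*} [CommSemiring R] (f : ℕ → R) (j n : ℕ) :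
    PowerSeries.coeff (n + 1) (hookProdGF (j + 1) f) =
      ∑ ab ∈ antidiagonal n, f (ab.1 + 1) * PowerSeries.coeff ab.1 (hookProdGF (j + 1) f ^ j) *
        PowerSeries.coeff ab.2 (hookProdGF (j + 1) f) := by
  rw [hookProdGF, coeff_gradedGF, setOf_internals_eq_succ, finsum_mem_image node_injective.injOn]
  simp only [hookProd1, hook1_eq]
  rw [finsum_snoc_eq_sum_antidiagonal _ finite_setOf_internals_eq (fun a => f (a + 1))]
  simp [coeff_gradedGF_pow _ finite_setOf_internals_eq]

theorem hookProdGF_eq {R : Type*} [CommRing R] [Algebra ℚ R] {p : ℕ} {f : ℕ → R} (a b : R)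
    (hf : ∀ h : ℕ, f (h + 1) = a - ((h + 1 : ℕ) : ℚ)⁻¹ • b) :
    hookProdGF (p + 1) f =
      1 + PowerSeries.C a * PowerSeries.X * hookProdGF (p + 1) f ^ (p + 1) -
        PowerSeries.C b * (hookProdGF (p + 1) f * (hookProdGF (p + 1) f ^ p).integral) := by
  ext (_ | n)
  · simp [coeff_zero_hookProdGF]
  · rw [coeff_succ_hookProdGF, map_sub, map_add, mul_assoc, PowerSeries.coeff_C_mul,
      PowerSeries.coeff_succ_X_mul, pow_succ, PowerSeries.coeff_mul, PowerSeries.coeff_C_mul,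
      mul_comm (hookProdGF _ _), PowerSeries.coeff_succ_integral_mul, PowerSeries.coeff_one,
      if_neg n.succ_ne_zero, zero_add, mul_sum, mul_sum, ← sum_sub_distrib]
    refine sum_congr rfl fun ab _ => ?_
    rw [hf, sub_mul, sub_mul]
    simp only [smul_mul_assoc, mul_smul_comm, mul_assoc]

end MTree

noncomputable def hookFactor (m h : ℕ) : ℚ[X] :=
  C ((((m : ℚ) - 1) * (h : ℚ))⁻¹) * (C ((m : ℚ) * (h : ℚ) - 1) * (X : ℚ[X]) - C ((h : ℚ) - 1))

theorem hookGF_eq_hookProdGF (m : ℕ) : hookGF m = MTree.hookProdGF m (hookFactor m) := rfl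

theorem hookFactor_succ {p : ℕ} (hp : (p : ℚ) ≠ 0) (h : ℕ) :
    hookFactor (p + 1) (h + 1) =
      C (p : ℚ)⁻¹ * (C ((p : ℚ) + 1) * X - 1) - ((h + 1 : ℕ) : ℚ)⁻¹ • (C (p : ℚ)⁻¹ * (X - 1)) := by
  refine Polynomial.funext fun x => ?_
  simp only [hookFactor, smul_eq_C_mul, Nat.cast_add, Nat.cast_one, add_sub_cancel_right,
    mul_inv_rev, map_mul, map_sub, map_add, map_natCast, map_one, eval_mul, eval_C, eval_sub,
    eval_add, eval_natCast, eval_one, eval_X]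
  field_simp
  ring

/-- **Differential equation for the generating function `𝓗_m(x;t)`.**
For `m ≥ 2`:  `𝓗'_m(x;t) = x 𝓗_m(x;t)^{m+1} + (mx-1) t 𝓗_m(x;t)^m 𝓗'_m(x;t)`,
the derivative being taken with respect to `t`. -/
theorem hookGF_differential_equation (m : ℕ) (hm : 2 ≤ m) :
    d⁄dX (Polynomial ℚ) (hookGF m) =
      PowerSeries.C (X : ℚ[X]) * hookGF m ^ (m + 1) +
        PowerSeries.C (C (m : ℚ) * (X : ℚ[X]) - 1) * PowerSeries.X *
          hookGF m ^ m * d⁄dX (Polynomial ℚ) (hookGF m) := by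
  obtain ⟨p, rfl⟩ : ∃ p, m = p + 1 := ⟨m - 1, by omega⟩
  have hp : (p : ℚ) ≠ 0 := by exact_mod_cast (by omega : p ≠ 0)
  have hode := PowerSeries.derivative_eq_of_eq_one_add_X_mul_pow p _ _
    (PowerSeries.derivative_integral _) (MTree.hookProdGF_eq _ _ (hookFactor_succ hp))
  rw [hookGF_eq_hookProdGF]
  convert hode using 6 <;> refine Polynomial.funext fun x => ?_ <;>
    simp only [Nat.cast_add, Nat.cast_one, map_add, map_natCast, map_one, eval_sub, eval_mul,
      eval_add, eval_natCast, eval_one, eval_X, eval_C]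
  · field_simp
    ring
  · field_simp
end
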